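/- For every graph G, the set of maximum critical independent sets of G equals the set of maximum independent sets S of the induced subgraph G[L(G)] such that no edge of G joins S to V(G) \ L(G). -/
import Mathlib


open Finset

variable {V : Type*} [Fintype V] [DecidableEq V] (G : SimpleGraph V) [DecidableRel G.Adj]

/-- `N(S)`: the set of vertices adjacent to some vertex of `S`. -/
def nbhd (S : Finset V) : Finset V := S.biUnion (fun v => G.neighborFinset v)

/-- `S` is an independent set of `G`. -/
def Indep (S : Finset V) : Prop := ∀ u ∈ S, ∀ v ∈ S, ¬ G.Adj u v

/-- The difference `d_G(S) = |S| - |N(S)|`. -/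
def diffI (S : Finset V) : ℤ := (S.card : ℤ) - ((nbhd G S).card : ℤ)

/-- `S` is a maximum independent set of `G`. -/
def IsMaxIndep (S : Finset V) : Prop :=
  Indep G S ∧ ∀ T : Finset V, Indep G T → T.card ≤ S.card

/-- `I` is a critical independent set of `G`. -/
def IsCritIndep (I : Finset V) : Prop :=
  Indep G I ∧ ∀ J : Finset V, Indep G J → diffI G J ≤ diffI G I

/-- `I` is a maximum critical independent set of `G`. -/
def IsMaxCritIndep (I : Finset V) : Prop :=
  IsCritIndep G I ∧ ∀ J : Finset V, IsCritIndep G J → J.card ≤ I.card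

/-- `core(G)`: intersection of all maximum independent sets. -/
def core : Set V := {v | ∀ S : Finset V, IsMaxIndep G S → v ∈ S}

/-- `corona(G)`: union of all maximum independent sets. -/
def corona : Set V := {v | ∃ S : Finset V, IsMaxIndep G S ∧ v ∈ S}

/-- `nucleus(G)`: intersection of all maximum critical independent sets. -/
def nucleus : Set V := {v | ∀ S : Finset V, IsMaxCritIndep G S → v ∈ S}

/-- `diadem(G)`: union of all maximum critical independent sets. -/
def diadem : Set V := {v | ∃ S : Finset V, IsMaxCritIndep G S ∧ v ∈ S}

/-- `ker(G)`: intersection of all critical independent sets. -/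
def kerS : Set V := {v | ∀ S : Finset V, IsCritIndep G S → v ∈ S}

/-- A matching of `G`, given as an involution of the vertex set:
unmatched vertices are fixed points, matched vertices are sent to their partner. -/
def IsMatching (M : V → V) : Prop :=
  Function.Involutive M ∧ ∀ v, M v ≠ v → G.Adj v (M v)

/-- Twice the number of edges of the matching `M`, i.e. the number of matched vertices. -/
def matchSize (M : V → V) : ℕ := (univ.filter fun v => M v ≠ v).card

/-- `M` is a maximum matching of `G`. -/
def IsMaxMatching (M : V → V) : Prop :=
  IsMatching G M ∧ ∀ M' : V → V, IsMatching G M' → matchSize M' ≤ matchSize M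

/-- `M` is a matching of the induced subgraph `G[L]`. -/
def IsMatchingOn (L : Finset V) (M : V → V) : Prop :=
  IsMatching G M ∧ ∀ v, M v ≠ v → v ∈ L

/-- `M` is a maximum matching of the induced subgraph `G[L]`. -/
def IsMaxMatchingOn (L : Finset V) (M : V → V) : Prop :=
  IsMatchingOn G L M ∧ ∀ M' : V → V, IsMatchingOn G L M' → matchSize M' ≤ matchSize M

/-- `S` is a maximum independent set of the induced subgraph `G[L]`. -/
def IsMaxIndepOn (L : Finset V) (S : Finset V) : Prop :=
  S ⊆ L ∧ Indep G S ∧ ∀ T : Finset V, T ⊆ L → Indep G T → T.card ≤ S.card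

/-- `core` of the induced subgraph `G[L]`. -/
def coreOn (L : Finset V) : Set V := {v | ∀ S : Finset V, IsMaxIndepOn G L S → v ∈ S}

/-- `D(G[L])`: vertices of `L` missed by some maximum matching of `G[L]`. -/
def Dset (L : Finset V) : Set V := {v | v ∈ L ∧ ∃ M : V → V, IsMaxMatchingOn G L M ∧ M v = v}

/-- The Larson boundary `∂_L(G)` of the set `L`. -/
def boundaryL (L : Finset V) : Set V := {v | v ∈ L ∧ ∃ w, w ∉ L ∧ G.Adj v w}

/-- The critical difference `d(G)`. -/
noncomputable def critDiff : ℤ := sSup {d : ℤ | ∃ X : Finset V, diffI G X = d}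

/-- The difference of `S` computed in the induced subgraph `G[L]`. -/
def diffOn (L : Finset V) (S : Finset V) : ℤ := (S.card : ℤ) - ((nbhd G S ∩ L).card : ℤ)

/-- The critical difference of the induced subgraph `G[L]`. -/
noncomputable def critDiffOn (L : Finset V) : ℤ := sSup {d : ℤ | ∃ X : Finset V, X ⊆ L ∧ diffOn G L X = d}

/-- `G` is a König–Egerváry graph: `α(G) + μ(G) = |V(G)|`. -/
def KonigEgervary : Prop :=
  ∃ (S : Finset V) (M : V → V), IsMaxIndep G S ∧ IsMaxMatching G M ∧
    2 * S.card + matchSize M = 2 * Fintype.card V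
/- Auxiliary lemmas -/

lemma mem_nbhd {S : Finset V} {v : V} : v ∈ nbhd G S ↔ ∃ u ∈ S, G.Adj u v := by
  simp [nbhd]

lemma nbhd_mono {A B : Finset V} (h : A ⊆ B) : nbhd G A ⊆ nbhd G B := by
  intro v hv
  rw [mem_nbhd] at hv ⊢
  obtain ⟨u, hu, ha⟩ := hv
  exact ⟨u, h hu, ha⟩

lemma nbhd_union (A B : Finset V) : nbhd G (A ∪ B) = nbhd G A ∪ nbhd G B := by
  ext v
  simp only [mem_nbhd, mem_union]
  constructor
  · rintro ⟨u, hu | hu, ha⟩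
    · exact Or.inl ⟨u, hu, ha⟩
    · exact Or.inr ⟨u, hu, ha⟩
  · rintro (⟨u, hu, ha⟩ | ⟨u, hu, ha⟩)
    · exact ⟨u, Or.inl hu, ha⟩
    · exact ⟨u, Or.inr hu, ha⟩

lemma indep_subset {A B : Finset V} (h : A ⊆ B) (hB : Indep G B) : Indep G A :=
  fun u hu v hv => hB u (h hu) v (h hv)

lemma indep_not_mem_nbhd {S : Finset V} (hS : Indep G S) {v : V} (hv : v ∈ S) :
    v ∉ nbhd G S := by
  rw [mem_nbhd]
  rintro ⟨u, hu, ha⟩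
  exact hS u hu v hv ha

lemma supermod (A B : Finset V) :
    diffI G A + diffI G B ≤ diffI G (A ∪ B) + diffI G (A ∩ B) := by
  have hc : (A ∪ B).card + (A ∩ B).card = A.card + B.card := card_union_add_card_inter A B
  have h1 : nbhd G (A ∪ B) = nbhd G A ∪ nbhd G B := nbhd_union G A B
  have h2 : nbhd G (A ∩ B) ⊆ nbhd G A ∩ nbhd G B :=
    subset_inter (nbhd_mono G inter_subset_left) (nbhd_mono G inter_subset_right)
  have h3 : (nbhd G (A ∪ B)).card + (nbhd G (A ∩ B)).card
      ≤ (nbhd G A).card + (nbhd G B).card := by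
    calc (nbhd G (A ∪ B)).card + (nbhd G (A ∩ B)).card
        ≤ (nbhd G A ∪ nbhd G B).card + (nbhd G A ∩ nbhd G B).card := by
          rw [h1]; exact Nat.add_le_add_left (card_le_card h2) _
      _ = (nbhd G A).card + (nbhd G B).card := card_union_add_card_inter _ _
  have hc' : ((A ∪ B).card : ℤ) + (A ∩ B).card = A.card + B.card := by exact_mod_cast hc
  have h3' : ((nbhd G (A ∪ B)).card : ℤ) + (nbhd G (A ∩ B)).card
      ≤ (nbhd G A).card + (nbhd G B).card := by exact_mod_cast h3
  unfold diffI
  linarith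

lemma red_indep (U : Finset V) : Indep G (U \ nbhd G U) := by
  intro u hu v hv hadj
  rw [mem_sdiff] at hu hv
  exact hv.2 ((mem_nbhd G).2 ⟨u, hu.1, hadj⟩)

lemma red_subset (U : Finset V) :
    (U ∩ nbhd G U) ∪ nbhd G (U \ nbhd G U) ⊆ nbhd G U :=
  union_subset inter_subset_right (nbhd_mono G sdiff_subset)

lemma red_disj (U : Finset V) :
    Disjoint (U ∩ nbhd G U) (nbhd G (U \ nbhd G U)) := by
  rw [disjoint_left]
  intro v hv hv2
  rw [mem_nbhd] at hv2
  obtain ⟨u, hu, ha⟩ := hv2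
  rw [mem_sdiff] at hu
  exact hu.2 ((mem_nbhd G).2 ⟨v, (mem_inter.1 hv).1, ha.symm⟩)

lemma red_card (U : Finset V) :
    (U ∩ nbhd G U).card + (nbhd G (U \ nbhd G U)).card ≤ (nbhd G U).card := by
  rw [← card_union_of_disjoint (red_disj G U)]
  exact card_le_card (red_subset G U)

lemma red_diff (U : Finset V) : diffI G U ≤ diffI G (U \ nbhd G U) := by
  have h1 : (U \ nbhd G U).card + (U ∩ nbhd G U).card = U.card :=
    card_sdiff_add_card_inter U (nbhd G U)
  have h2 := red_card G U
  have h1' : ((U \ nbhd G U).card : ℤ) + (U ∩ nbhd G U).card = U.card := by exact_mod_cast h1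
  have h2' : ((U ∩ nbhd G U).card : ℤ) + (nbhd G (U \ nbhd G U)).card ≤ (nbhd G U).card := by
    exact_mod_cast h2
  unfold diffI
  linarith

lemma red_eq (U : Finset V) (h : diffI G (U \ nbhd G U) ≤ diffI G U) :
    nbhd G U = (U ∩ nbhd G U) ∪ nbhd G (U \ nbhd G U) := by
  refine (eq_of_subset_of_card_le (red_subset G U) ?_).symm
  have h1 : (U \ nbhd G U).card + (U ∩ nbhd G U).card = U.card :=
    card_sdiff_add_card_inter U (nbhd G U)
  have hcu : ((U ∩ nbhd G U) ∪ nbhd G (U \ nbhd G U)).card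
      = (U ∩ nbhd G U).card + (nbhd G (U \ nbhd G U)).card :=
    card_union_of_disjoint (red_disj G U)
  have h1' : ((U \ nbhd G U).card : ℤ) + (U ∩ nbhd G U).card = U.card := by exact_mod_cast h1
  unfold diffI at h
  have : ((nbhd G U).card : ℤ) ≤ (U ∩ nbhd G U).card + (nbhd G (U \ nbhd G U)).card := by
    linarith
  have hn : (nbhd G U).card ≤ (U ∩ nbhd G U).card + (nbhd G (U \ nbhd G U)).card := by
    exact_mod_cast this
  omega

lemma diff_le_crit {J : Finset V} (hJ : IsCritIndep G J) (U : Finset V) :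
    diffI G U ≤ diffI G J :=
  le_trans (red_diff G U) (hJ.2 _ (red_indep G U))

lemma hall_cond {J : Finset V} (hJ : IsCritIndep G J) {A : Finset V} (hA : A ⊆ nbhd G J) :
    A.card ≤ (nbhd G A ∩ J).card := by
  have hind : Indep G (J \ nbhd G A) := indep_subset G sdiff_subset hJ.1
  have hsub1 : A ∪ nbhd G (J \ nbhd G A) ⊆ nbhd G J :=
    union_subset hA (nbhd_mono G sdiff_subset)
  have hdisj : Disjoint A (nbhd G (J \ nbhd G A)) := by
    rw [disjoint_left]
    intro a haA haN
    rw [mem_nbhd] at haN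
    obtain ⟨u, hu, hadj⟩ := haN
    rw [mem_sdiff] at hu
    exact hu.2 ((mem_nbhd G).2 ⟨a, haA, hadj.symm⟩)
  have h1 : A.card + (nbhd G (J \ nbhd G A)).card ≤ (nbhd G J).card := by
    rw [← card_union_of_disjoint hdisj]
    exact card_le_card hsub1
  have h2 : J.card ≤ (J \ nbhd G A).card + (nbhd G A ∩ J).card := by
    have hsub : J ⊆ (J \ nbhd G A) ∪ (nbhd G A ∩ J) := by
      intro j hj
      by_cases hjn : j ∈ nbhd G A
      · exact mem_union_right _ (mem_inter.2 ⟨hjn, hj⟩)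
      · exact mem_union_left _ (mem_sdiff.2 ⟨hj, hjn⟩)
    exact le_trans (card_le_card hsub) (card_union_le _ _)
  have h3 : diffI G (J \ nbhd G A) ≤ diffI G J := hJ.2 _ hind
  unfold diffI at h3
  have h1' : (A.card : ℤ) + (nbhd G (J \ nbhd G A)).card ≤ (nbhd G J).card := by
    exact_mod_cast h1
  have h2' : (J.card : ℤ) ≤ (J \ nbhd G A).card + (nbhd G A ∩ J).card := by exact_mod_cast h2
  have : (A.card : ℤ) ≤ (nbhd G A ∩ J).card := by linarith
  exact_mod_cast this

lemma exists_hall_matching {J : Finset V} (hJ : IsCritIndep G J) :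
    ∃ f : {x // x ∈ nbhd G J} → V, Function.Injective f ∧
      ∀ x, f x ∈ G.neighborFinset x.1 ∩ J := by
  rw [← Finset.all_card_le_biUnion_card_iff_exists_injective]
  intro s
  have himg : s.card = (s.image Subtype.val).card :=
    (card_image_of_injective s Subtype.val_injective).symm
  have hsub : s.image Subtype.val ⊆ nbhd G J := by
    intro v hv
    rw [mem_image] at hv
    obtain ⟨x, _, rfl⟩ := hv
    exact x.2
  have hbu : s.biUnion (fun x => G.neighborFinset x.1 ∩ J)
      = nbhd G (s.image Subtype.val) ∩ J := by
    ext v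
    simp only [mem_biUnion, mem_inter, mem_nbhd, mem_image, SimpleGraph.mem_neighborFinset]
    constructor
    · rintro ⟨x, hx, hadj, hJv⟩
      exact ⟨⟨x.1, ⟨x, hx, rfl⟩, hadj⟩, hJv⟩
    · rintro ⟨⟨u, ⟨x, hx, rfl⟩, hadj⟩, hJv⟩
      exact ⟨x, hx, hadj, hJv⟩
  rw [hbu, himg]
  exact hall_cond G hJ hsub

theorem stmt7 (J : Finset V) (hJ : IsMaxCritIndep G J) (S : Finset V) :
    IsMaxCritIndep G S ↔
      (IsMaxIndepOn G (J ∪ nbhd G J) S ∧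
        ∀ u ∈ S, ∀ v, v ∉ J ∪ nbhd G J → ¬ G.Adj u v) := by
  have hJd : Disjoint J (nbhd G J) :=
    disjoint_left.2 fun {a} ha hn => indep_not_mem_nbhd G hJ.1.1 ha hn
  have hLcard : (J ∪ nbhd G J).card = J.card + (nbhd G J).card := card_union_of_disjoint hJd
  constructor
  · intro hS
    have hfs : diffI G S = diffI G J := le_antisymm (hJ.1.2 S hS.1.1) (hS.1.2 J hJ.1.1)
    have hcard : S.card = J.card := le_antisymm (hJ.2 S hS.1) (hS.2 J hJ.1)
    have hXind : Indep G (S ∩ J) := indep_subset G inter_subset_left hS.1.1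
    have hXle : diffI G (S ∩ J) ≤ diffI G J := hJ.1.2 _ hXind
    have hUle : diffI G (S ∪ J) ≤ diffI G J := diff_le_crit G hJ.1 _
    have hsup := supermod G S J
    have hUd : diffI G (S ∪ J) = diffI G J := by linarith
    have hXd : diffI G (S ∩ J) = diffI G J := by linarith
    set U := S ∪ J with hU
    set W := U \ nbhd G U with hW
    have hWind : Indep G W := red_indep G U
    have hWd : diffI G W = diffI G J :=
      le_antisymm (hJ.1.2 W hWind) (hUd ▸ red_diff G U)
    have hNeq : nbhd G U = (U ∩ nbhd G U) ∪ nbhd G W :=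
      red_eq G U (le_of_eq (hWd.trans hUd.symm))
    -- W ⊆ S
    have hWsub : ∀ T : Finset V, IsMaxCritIndep G T → T ⊆ U → W ⊆ T := by
      intro T hT hTU
      have hind : Indep G (W ∪ T) := by
        intro u hu v hv hadj
        rcases mem_union.1 hu with hu' | hu' <;> rcases mem_union.1 hv with hv' | hv'
        · exact hWind u hu' v hv' hadj
        · exact (mem_sdiff.1 hu').2 ((mem_nbhd G).2 ⟨v, hTU hv', hadj.symm⟩)
        · exact (mem_sdiff.1 hv').2 ((mem_nbhd G).2 ⟨u, hTU hu', hadj⟩)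
        · exact hT.1.1 u hu' v hv' hadj
      have hfT : diffI G T = diffI G J := le_antisymm (hJ.1.2 T hT.1.1) (hT.1.2 J hJ.1.1)
      have h1 : diffI G (W ∪ T) ≤ diffI G J := hJ.1.2 _ hind
      have h2 : diffI G (W ∩ T) ≤ diffI G J :=
        hJ.1.2 _ (indep_subset G inter_subset_left hWind)
      have h3 := supermod G W T
      have hUnd : diffI G (W ∪ T) = diffI G J := by linarith
      have hcrit : IsCritIndep G (W ∪ T) :=
        ⟨hind, fun Q hQ => (hJ.1.2 Q hQ).trans hUnd.ge⟩
      have hle := hT.2 _ hcrit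
      have heq : T = W ∪ T := eq_of_subset_of_card_le subset_union_right hle
      intro w hw
      rw [heq]
      exact mem_union_left _ hw
    have hWS : W ⊆ S := hWsub S hS subset_union_left
    have hWJ : W ⊆ J := hWsub J hJ subset_union_right
    have hXW : S ∩ J ⊆ W := by
      intro x hx
      rw [hW, mem_sdiff]
      refine ⟨mem_union_left _ (mem_inter.1 hx).1, ?_⟩
      intro hxn
      rw [hU, nbhd_union] at hxn
      rcases mem_union.1 hxn with h | h
      · exact indep_not_mem_nbhd G hS.1.1 (mem_inter.1 hx).1 h
      · exact indep_not_mem_nbhd G hJ.1.1 (mem_inter.1 hx).2 h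
    have hWX : W = S ∩ J := subset_antisymm (subset_inter hWS hWJ) hXW
    -- (a) S ⊆ L
    have haS : S ⊆ J ∪ nbhd G J := by
      intro s hs
      by_cases hsJ : s ∈ J
      · exact mem_union_left _ hsJ
      have hsn : s ∈ nbhd G U := by
        by_contra hn
        have hsW : s ∈ W := mem_sdiff.2 ⟨mem_union_left _ hs, hn⟩
        rw [hWX] at hsW
        exact hsJ (mem_inter.1 hsW).2
      rw [hU, nbhd_union] at hsn
      rcases mem_union.1 hsn with h | h
      · exact absurd h (indep_not_mem_nbhd G hS.1.1 hs)
      · exact mem_union_right _ h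
    -- (b) N(S) ⊆ L
    have hbS : nbhd G S ⊆ J ∪ nbhd G J := by
      intro v hv
      by_cases hvJ : v ∈ nbhd G J
      · exact mem_union_right _ hvJ
      have hvU : v ∈ nbhd G U := by
        rw [hU, nbhd_union]
        exact mem_union_left _ hv
      rw [hNeq] at hvU
      rcases mem_union.1 hvU with h | h
      · rcases mem_union.1 (mem_inter.1 h).1 with h2 | h2
        · exact absurd hv (indep_not_mem_nbhd G hS.1.1 h2)
        · exact mem_union_left _ h2
      · rw [hWX] at h
        exact absurd (nbhd_mono G inter_subset_right h) hvJ
    -- (c) maximality in G[L]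
    obtain ⟨f, hfinj, hf⟩ := exists_hall_matching G hJ.1
    have hmaxL : ∀ T ⊆ J ∪ nbhd G J, Indep G T → T.card ≤ S.card := by
      intro T hTL hTind
      have hg : ∀ x : {x // x ∈ nbhd G J},
          (if (x : V) ∈ T then f x else (x : V)) ∈ (J ∪ nbhd G J) \ T := by
        intro x
        by_cases hx : (x : V) ∈ T
        · rw [if_pos hx]
          have hfx := hf x
          rw [mem_inter, SimpleGraph.mem_neighborFinset] at hfx
          exact mem_sdiff.2 ⟨mem_union_left _ hfx.2, fun hfT => hTind _ hx _ hfT hfx.1⟩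
        · rw [if_neg hx]
          exact mem_sdiff.2 ⟨mem_union_right _ x.2, hx⟩
      have hinj : Set.InjOn (fun x : {x // x ∈ nbhd G J} =>
          if (x : V) ∈ T then f x else (x : V)) ((nbhd G J).attach : Set _) := by
        intro x _ y _ hxy
        simp only at hxy
        by_cases hx : (x : V) ∈ T <;> by_cases hy : (y : V) ∈ T
        · rw [if_pos hx, if_pos hy] at hxy
          exact hfinj hxy
        · rw [if_pos hx, if_neg hy] at hxy
          have h1 : f x ∈ J := (mem_inter.1 (hf x)).2
          exact absurd y.2 (fun h => disjoint_left.1 hJd (hxy ▸ h1) h)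
        · rw [if_neg hx, if_pos hy] at hxy
          have h1 : f y ∈ J := (mem_inter.1 (hf y)).2
          exact absurd x.2 (fun h => disjoint_left.1 hJd (hxy ▸ h1) h)
        · rw [if_neg hx, if_neg hy] at hxy
          exact Subtype.ext hxy
      have hcle : (nbhd G J).card ≤ ((J ∪ nbhd G J) \ T).card := by
        rw [← card_attach]
        exact card_le_card_of_injOn _ (fun x _ => hg x) hinj
      have hsd : ((J ∪ nbhd G J) \ T).card = (J ∪ nbhd G J).card - T.card :=
        card_sdiff_of_subset hTL
      have hTle : T.card ≤ (J ∪ nbhd G J).card := card_le_card hTL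
      omega
    refine ⟨⟨haS, hS.1.1, hmaxL⟩, ?_⟩
    intro u hu v hv hadj
    exact hv (hbS ((mem_nbhd G).2 ⟨u, hu, hadj⟩))
  · rintro ⟨⟨hsub, hind, hmax⟩, hedge⟩
    have hNSL : nbhd G S ⊆ J ∪ nbhd G J := by
      intro v hv
      obtain ⟨u, hu, ha⟩ := (mem_nbhd G).1 hv
      by_contra hvL
      exact hedge u hu v hvL ha
    have hJS : J.card ≤ S.card := hmax J subset_union_left hJ.1.1
    have hNSdisj : Disjoint (nbhd G S) S :=
      disjoint_left.2 fun {a} ha hn => indep_not_mem_nbhd G hind hn ha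
    have h1 : (nbhd G S).card + S.card ≤ (J ∪ nbhd G J).card := by
      rw [← card_union_of_disjoint hNSdisj]
      exact card_le_card (union_subset hNSL hsub)
    have hd : diffI G J ≤ diffI G S := by
      unfold diffI
      have h1' : ((nbhd G S).card : ℤ) + S.card ≤ (J ∪ nbhd G J).card := by exact_mod_cast h1
      have hL' : ((J ∪ nbhd G J).card : ℤ) = J.card + (nbhd G J).card := by
        exact_mod_cast hLcard
      have hJS' : (J.card : ℤ) ≤ S.card := by exact_mod_cast hJS
      linarith
    have hcrit : IsCritIndep G S := ⟨hind, fun T hT => (hJ.1.2 T hT).trans hd⟩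
    exact ⟨hcrit, fun T hT => (hJ.2 T hT).trans hJS⟩
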